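/- arXiv:2307.02315 — 6 statements merged into one kernel-verified Lean document; each statement's English description precedes it below -/
import Mathlib

section
/- Let K be a field with valuation v, μ a valuation on K[x] extending v, and f, q ∈ K[x] with deg(q) ≥ 1 and a ∈ K nonzero. If f = f_0 + f_1 q + ... + f_n q^n is the q-expansion of f (with deg(f_i) < deg(q)), then f = f_0 + (f_1/a)(aq) + ... + (f_n/a^n)(aq)^n is the aq-expansion of f. Consequently, if μ_q(f) = μ(f) then μ_{aq}(f) = μ(f), where μ_q(f) := min_i μ(f_i q^i). -/
open Polynomial

/-! The two expansions agree summand by summand, `(a⁻ⁱ cᵢ)(aq)ⁱ = cᵢ qⁱ`, so they have the same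
sum and the same truncation; the degree bound survives because scaling by a unit preserves degree. -/

theorem C_inv_pow_mul_mul_C_mul_pow {K : Type*} [Field K] {a : K} (ha : a ≠ 0)
    (p q : K[X]) (i : ℕ) : C (a⁻¹ ^ i) * p * (C a * q) ^ i = p * q ^ i := by
  rw [mul_pow, ← C_pow, mul_mul_mul_comm, ← C_mul, inv_pow, inv_mul_cancel₀ (pow_ne_zero i ha),
    C_1, one_mul]

theorem qExpansion_scale_general {K Γ : Type*} [Field K] [AddCommGroup Γ] [LinearOrder Γ] [IsOrderedAddMonoid Γ]
    (μ : Polynomial K → WithTop Γ)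
    (f q : Polynomial K)
    (n : ℕ) (c : ℕ → Polynomial K)
    (hdeg : ∀ i, (c i).degree < q.degree)
    (hexp : f = ∑ i ∈ Finset.range (n + 1), c i * q ^ i)
    (a : K) (ha : a ≠ 0) :
    (f = ∑ i ∈ Finset.range (n + 1),
        (Polynomial.C (a⁻¹ ^ i) * c i) * (Polynomial.C a * q) ^ i) ∧
    (∀ i, (Polynomial.C (a⁻¹ ^ i) * c i).degree < (Polynomial.C a * q).degree) ∧
    ((Finset.range (n + 1)).inf' Finset.nonempty_range_add_one
        (fun i => μ (c i * q ^ i)) = μ f →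
      (Finset.range (n + 1)).inf' Finset.nonempty_range_add_one
        (fun i => μ ((Polynomial.C (a⁻¹ ^ i) * c i) * (Polynomial.C a * q) ^ i))
        = μ f) := by
  have hterm i := C_inv_pow_mul_mul_C_mul_pow ha (c i) q i
  refine ⟨by simpa only [hterm] using hexp, fun i => ?_, fun h => by simpa only [hterm] using h⟩
  rw [degree_C_mul (pow_ne_zero i (inv_ne_zero ha)), degree_C_mul ha]
  exact hdeg i

theorem qExpansion_scale {K Γ : Type*} [Field K] [AddCommGroup Γ] [LinearOrder Γ] [IsOrderedAddMonoid Γ]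
    (μ : Polynomial K → WithTop Γ)
    (hmul : ∀ f g : Polynomial K, μ (f * g) = μ f + μ g)
    (f q : Polynomial K) (hq : 1 ≤ q.degree)
    (n : ℕ) (c : ℕ → Polynomial K)
    (hdeg : ∀ i, (c i).degree < q.degree)
    (hexp : f = ∑ i ∈ Finset.range (n + 1), c i * q ^ i)
    (a : K) (ha : a ≠ 0) :
    (f = ∑ i ∈ Finset.range (n + 1),
        (Polynomial.C (a⁻¹ ^ i) * c i) * (Polynomial.C a * q) ^ i) ∧
    (∀ i, (Polynomial.C (a⁻¹ ^ i) * c i).degree < (Polynomial.C a * q).degree) ∧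
    ((Finset.range (n + 1)).inf' Finset.nonempty_range_add_one
        (fun i => μ (c i * q ^ i)) = μ f →
      (Finset.range (n + 1)).inf' Finset.nonempty_range_add_one
        (fun i => μ ((Polynomial.C (a⁻¹ ^ i) * c i) * (Polynomial.C a * q) ^ i))
        = μ f) :=
  qExpansion_scale_general μ f q n c hdeg hexp a ha
end

section
/- Let μ be a valuation on K[x] extending a valuation v on K, and let Q ⊆ K[x] be a complete set for μ such that μ(q) = 0 for every q ∈ Q. Then for every f ∈ K[x] with μ(f) ≥ 0 there exist finitely many multi-indices λ_1, ..., λ_s ∈ ℕ^Q and elements a_1, ..., a_s in the valuation ring O_K of K such that f = Σ_{i=1}^s a_i Q^{λ_i} and μ(f) = min_i v(a_i), where Q^{λ} denotes the finite product ∏_{q∈Q} q^{λ(q)}. -/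
open Polynomial

/-- An additive valuation on a field with values in `WithTop Γ`. -/
structure AddVal (L : Type*) [Field L] (Γ : Type*) [AddCommGroup Γ] [LinearOrder Γ] [IsOrderedAddMonoid Γ] where
  v : L → WithTop Γ
  map_mul : ∀ x y : L, v (x * y) = v x + v y
  map_add : ∀ x y : L, min (v x) (v y) ≤ v (x + y)
  map_one : v 1 = 0
  map_neg : ∀ x : L, v (-x) = v x
  top_iff : ∀ x : L, v x = ⊤ ↔ x = 0

variable {K L Γ : Type*} [Field K] [Field L] [AddCommGroup Γ] [LinearOrder Γ] [IsOrderedAddMonoid Γ]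

/-- The valuation ring of an additive valuation. -/
def AddVal.ring (w : AddVal L Γ) : Subring L where
  carrier := {x | 0 ≤ w.v x}
  mul_mem' := by
    intro a b ha hb
    simp only [Set.mem_setOf_eq] at *
    rw [w.map_mul]; exact add_nonneg ha hb
  one_mem' := by simp only [Set.mem_setOf_eq, w.map_one, le_refl]
  add_mem' := by
    intro a b ha hb
    simp only [Set.mem_setOf_eq] at *
    exact le_trans (le_min ha hb) (w.map_add a b)
  zero_mem' := by
    simp only [Set.mem_setOf_eq, (w.top_iff 0).mpr rfl, le_top]
  neg_mem' := by
    intro a ha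
    simp only [Set.mem_setOf_eq] at *
    rwa [w.map_neg]

/-- Pullback of an additive valuation along a ring homomorphism of fields. -/
def AddVal.comap (w : AddVal L Γ) (f : K →+* L) : AddVal K Γ where
  v c := w.v (f c)
  map_mul x y := by rw [_root_.map_mul, w.map_mul]
  map_add x y := by simpa using w.map_add (f x) (f y)
  map_one := by simpa using w.map_one
  map_neg x := by simpa using w.map_neg (f x)
  top_iff x := by rw [w.top_iff, _root_.map_eq_zero]

/-- `γ` is the truncation `μ_q(f)` of `μ` at `q`, computed from the `q`-expansion of `f`. -/
def IsTrunc (μ : Polynomial K → WithTop Γ) (q f : Polynomial K) (γ : WithTop Γ) : Prop :=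
  ∃ (n : ℕ) (c : ℕ → Polynomial K), (∀ m, (c m).degree < q.degree) ∧
    (f = ∑ m ∈ Finset.range (n + 1), c m * q ^ m) ∧
    γ = (Finset.range (n + 1)).inf' Finset.nonempty_range_add_one
      (fun m => μ (c m * q ^ m))

/-- A complete set of polynomials for `μ`. -/
def CompleteSet (μ : Polynomial K → WithTop Γ) (S : Set (Polynomial K)) : Prop :=
  (∀ q ∈ S, 1 ≤ q.degree) ∧
  ∀ f : Polynomial K, 1 ≤ f.degree →
    ∃ q ∈ S, q.degree ≤ f.degree ∧ IsTrunc μ q f (μ f)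

/-- Two sets of polynomials are `K`-proportional. -/
def KProportional (S S' : Set (Polynomial K)) : Prop :=
  ∃ φ : Polynomial K → Polynomial K, Set.BijOn φ S S' ∧
    ∀ q ∈ S, ∃ a : K, a ≠ 0 ∧ φ q = Polynomial.C a * q

/-!
Induction on the degree. By completeness, a nonconstant `f` has a `q`-expansion
`f = ∑ cₘ qᵐ` with `q ∈ S`, `deg cₘ < deg q ≤ deg f` and `μ f = min μ (cₘ qᵐ)`. Since `μ q = 0`,
`μ (cₘ qᵐ) = μ cₘ`, so concatenating the representations of the `cₘ` given by the induction
hypothesis, each multiplied by `qᵐ`, represents `f` with `μ f` as its minimal coefficient value.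
Such a representation exists for every `f`; when `μ f ≥ 0` it puts all coefficients in `𝒪_K`.
-/

theorem Fin.inf'_univ_append {α β : Type*} [LinearOrder α] {m n : ℕ} (g : β → α)
    (x : Fin m → β) (y : Fin n → β) (h : (Finset.univ : Finset (Fin (m + n))).Nonempty)
    (hx : (Finset.univ : Finset (Fin m)).Nonempty) (hy : (Finset.univ : Finset (Fin n)).Nonempty) :
    Finset.univ.inf' h (fun j => g (Fin.append x y j)) =
      min (Finset.univ.inf' hx (fun j => g (x j))) (Finset.univ.inf' hy (fun j => g (y j))) :=
  eq_of_forall_le_iff fun c => by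
    simp [Finset.le_inf'_iff, Fin.forall_fin_add]

section MonomialRep

variable {R α : Type*} [CommSemiring R] [LinearOrder α] (μ : R[X] → α) (S : Set R[X])

def HasMonomialRep (f : R[X]) (γ : α) : Prop :=
  ∃ (s : ℕ) (a : Fin (s + 1) → R) (lam : Fin (s + 1) → (R[X] →₀ ℕ)),
    (∀ j, ↑(lam j).support ⊆ S) ∧
    f = ∑ j, C (a j) * (lam j).prod (fun q k => q ^ k) ∧
    γ = Finset.univ.inf' Finset.univ_nonempty (fun j => μ (C (a j)))

variable {μ S}

theorem hasMonomialRep_C (a : R) : HasMonomialRep μ S (C a) (μ (C a)) :=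
  ⟨0, fun _ => a, fun _ => 0, by simp, by simp, by simp⟩

theorem HasMonomialRep.of_fin {n : ℕ} {f : R[X]} {γ : α} (a : Fin n → R)
    (lam : Fin n → (R[X] →₀ ℕ)) (hn : (Finset.univ : Finset (Fin n)).Nonempty)
    (hsupp : ∀ j, ↑(lam j).support ⊆ S) (hf : f = ∑ j, C (a j) * (lam j).prod (fun q k => q ^ k))
    (hγ : γ = Finset.univ.inf' hn (fun j => μ (C (a j)))) : HasMonomialRep μ S f γ := by
  obtain ⟨s, rfl⟩ : ∃ s, n = s + 1 := Nat.exists_eq_add_one.2 (Fin.pos_iff_nonempty.2 ⟨hn.choose⟩)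
  exact ⟨s, a, lam, hsupp, hf, hγ⟩

theorem HasMonomialRep.add {f g : R[X]} {γ δ : α}
    (hf : HasMonomialRep μ S f γ) (hg : HasMonomialRep μ S g δ) :
    HasMonomialRep μ S (f + g) (min γ δ) := by
  obtain ⟨s, a, lam, hsupp, rfl, rfl⟩ := hf
  obtain ⟨t, b, lam', hsupp', rfl, rfl⟩ := hg
  refine .of_fin (Fin.append a b) (Fin.append lam lam') Finset.univ_nonempty
    (Fin.addCases (by simpa using hsupp) (by simpa using hsupp')) ?_
    (Fin.inf'_univ_append (fun c => μ (C c)) a b _ _ _).symm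
  simp [Fin.sum_univ_add]

theorem HasMonomialRep.mul_pow {f : R[X]} {γ : α} (hf : HasMonomialRep μ S f γ)
    {q : R[X]} (hq : q ∈ S) (m : ℕ) : HasMonomialRep μ S (f * q ^ m) γ := by
  classical
  obtain ⟨s, a, lam, hsupp, rfl, rfl⟩ := hf
  refine ⟨s, a, fun j => lam j + Finsupp.single q m, fun j => ?_, ?_, rfl⟩
  · refine (Finset.coe_subset.2 Finsupp.support_add).trans ?_
    rw [Finset.coe_union]
    exact Set.union_subset (hsupp j)
      ((Finset.coe_subset.2 Finsupp.support_single_subset).trans (by simpa using hq))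
  · simp only [Finset.sum_mul, mul_assoc,
      Finsupp.prod_add_index' (fun _ => pow_zero _) (fun _ _ _ => pow_add _ _ _),
      Finsupp.prod_single_index (pow_zero q)]

theorem hasMonomialRep_sum {ι : Type*} {t : Finset ι} (ht : t.Nonempty) (c : ι → R[X])
    (γ : ι → α) (h : ∀ i ∈ t, HasMonomialRep μ S (c i) (γ i)) :
    HasMonomialRep μ S (∑ i ∈ t, c i) (t.inf' ht γ) := by
  induction ht using Finset.Nonempty.cons_induction with
  | singleton i => simpa using h i (Finset.mem_singleton_self i)
  | cons i t hi ht ih =>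
    rw [Finset.sum_cons, Finset.inf'_cons ht]
    exact (h i (Finset.mem_cons_self i t)).add (ih fun j hj => h j (Finset.mem_cons_of_mem hj))

end MonomialRep

theorem apply_mul_pow_of_apply_eq_zero {R M : Type*} [Monoid R] [AddZeroClass M] (μ : R → M)
    (hmul : ∀ f g : R, μ (f * g) = μ f + μ g) {q : R} (hq : μ q = 0) (c : R) (m : ℕ) :
    μ (c * q ^ m) = μ c := by
  induction m with
  | zero => rw [pow_zero, mul_one]
  | succ m ih => rw [pow_succ, ← mul_assoc, hmul, ih, hq, add_zero]

theorem hasMonomialRep_of_completeSet {K Γ : Type*} [Field K] [AddCommGroup Γ] [LinearOrder Γ]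
    (μ : K[X] → WithTop Γ) (hmul : ∀ f g : K[X], μ (f * g) = μ f + μ g)
    {S : Set K[X]} (hS : CompleteSet μ S) (hS0 : ∀ q ∈ S, μ q = 0) (f : K[X]) :
    HasMonomialRep μ S f (μ f) := by
  induction hn : f.natDegree using Nat.strong_induction_on generalizing f with
  | _ n ih =>
    rcases Nat.eq_zero_or_pos n with rfl | hpos
    · rw [eq_C_of_natDegree_eq_zero hn]
      exact hasMonomialRep_C _
    obtain ⟨q, hqS, hqf, N, c, hc, hf_eq, hμf⟩ :=
      hS.2 f (Nat.WithBot.one_le_iff_zero_lt.2 (natDegree_pos_iff_degree_pos.1 (hn ▸ hpos)))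
    have hc_deg : ∀ m, (c m).natDegree < n := fun m => by
      by_cases hcm : c m = 0
      · simpa [hcm] using hpos
      · exact hn ▸ natDegree_lt_natDegree hcm ((hc m).trans_le hqf)
    rw [hμf, hf_eq]
    refine hasMonomialRep_sum _ _ _ fun m _ => ?_
    rw [apply_mul_pow_of_apply_eq_zero μ hmul (hS0 q hqS)]
    exact (ih _ (hc_deg m) (c m) rfl).mul_pow hqS m

theorem exists_OK_combination_general {K Γ : Type*} [Field K]
    [AddCommGroup Γ] [LinearOrder Γ]
    (μ : Polynomial K → WithTop Γ)
    (hmul : ∀ f g : Polynomial K, μ (f * g) = μ f + μ g)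
    (S : Set (Polynomial K)) (hS : CompleteSet μ S)
    (hS0 : ∀ q ∈ S, μ q = 0)
    (f : Polynomial K) (hf : 0 ≤ μ f) :
    ∃ (s : ℕ) (a : Fin (s + 1) → K) (lam : Fin (s + 1) → (Polynomial K →₀ ℕ)),
      (∀ j, ↑(lam j).support ⊆ S) ∧
      -- the coefficients lie in the valuation ring `𝒪_K`:
      (∀ j, 0 ≤ μ (Polynomial.C (a j))) ∧
      f = ∑ j : Fin (s + 1),
            Polynomial.C (a j) * (lam j).prod (fun q k => q ^ k) ∧
      μ f = Finset.univ.inf' Finset.univ_nonempty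
              (fun j : Fin (s + 1) => μ (Polynomial.C (a j))) := by
  obtain ⟨s, a, lam, hsupp, hf_eq, hμf⟩ := hasMonomialRep_of_completeSet μ hmul hS hS0 f
  exact ⟨s, a, lam, hsupp, fun j => hf.trans (hμf ▸ Finset.inf'_le _ (Finset.mem_univ j)),
    hf_eq, hμf⟩

theorem exists_OK_combination {K Γ : Type*} [Field K]
    [AddCommGroup Γ] [LinearOrder Γ] [IsOrderedAddMonoid Γ]
    (μ : Polynomial K → WithTop Γ)
    (hmul : ∀ f g : Polynomial K, μ (f * g) = μ f + μ g)
    (hadd : ∀ f g : Polynomial K, min (μ f) (μ g) ≤ μ (f + g))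
    (hone : μ 1 = 0)
    (S : Set (Polynomial K)) (hS : CompleteSet μ S)
    (hS0 : ∀ q ∈ S, μ q = 0)
    (f : Polynomial K) (hf : 0 ≤ μ f) :
    ∃ (s : ℕ) (a : Fin (s + 1) → K) (lam : Fin (s + 1) → (Polynomial K →₀ ℕ)),
      (∀ j, ↑(lam j).support ⊆ S) ∧
      -- the coefficients lie in the valuation ring `𝒪_K`:
      (∀ j, 0 ≤ μ (Polynomial.C (a j))) ∧
      f = ∑ j : Fin (s + 1),
            Polynomial.C (a j) * (lam j).prod (fun q k => q ^ k) ∧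
      μ f = Finset.univ.inf' Finset.univ_nonempty
              (fun j : Fin (s + 1) => μ (Polynomial.C (a j))) :=
  exists_OK_combination_general μ hmul S hS hS0 f hf
end

section
/- Let Γ be an ordered abelian group and Δ a subgroup of Γ of finite index such that ε := |{γ ∈ Γ : 0 ≤ γ < Δ_{>0}}| equals [Γ : Δ]. Then there exist γ_1, ..., γ_ε ∈ Γ such that Γ = ⋃_{i=1}^ε (γ_i + Δ) and 0 = γ_1 < γ_2 < ... < γ_ε < Δ_{>0}. -/
/-!
If `0 ≤ u < t < Δ_{>0}` and `t - u ∈ Δ`, then `t - u` would be a positive element of `Δ` with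
`t - u ≤ t`, which is impossible. Hence the elements of `[0, Δ_{>0})` lie in pairwise distinct
cosets of `Δ`; when there are `[Γ : Δ]` of them they represent every coset, and listing them in
increasing order gives the representatives, the first one being the least element `0`.
-/

lemma OrderIso.apply_zero_eq_of_isBot {α : Type*} [PartialOrder α] {n : ℕ} (e : Fin n ≃o α)
    (hn : 0 < n) {a : α} (ha : IsBot a) : e ⟨0, hn⟩ = a :=
  le_antisymm (by simpa using e.monotone (Fin.mk_le_of_le_val (Nat.zero_le (e.symm a)))) (ha _)

namespace AddSubgroup

variable {Γ : Type*} [AddCommGroup Γ] [LinearOrder Γ] (Δ : AddSubgroup Γ)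

def belowPositivePart : Set Γ := {γ | 0 ≤ γ ∧ ∀ δ ∈ Δ, 0 < δ → γ < δ}

variable {Δ}

lemma zero_mem_belowPositivePart : (0 : Γ) ∈ Δ.belowPositivePart :=
  ⟨le_rfl, fun _ _ hδ => hδ⟩

variable [IsOrderedAddMonoid Γ]

lemma eq_of_le_of_sub_mem {t u : Γ} (ht : t ∈ Δ.belowPositivePart)
    (hu : u ∈ Δ.belowPositivePart) (hut : u ≤ t) (hsub : t - u ∈ Δ) : t = u := by
  by_contra hne
  exact (sub_le_self t hu.1).not_gt (ht.2 _ hsub (sub_pos.mpr (hut.lt_of_ne' hne)))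

lemma eq_of_sub_mem {t u : Γ} (ht : t ∈ Δ.belowPositivePart) (hu : u ∈ Δ.belowPositivePart)
    (hsub : t - u ∈ Δ) : t = u := by
  rcases le_total u t with hut | htu
  · exact eq_of_le_of_sub_mem ht hu hut hsub
  · exact (eq_of_le_of_sub_mem hu ht htu (Δ.sub_mem_comm_iff.mp hsub)).symm

lemma injective_mk_belowPositivePart :
    Function.Injective fun t : Δ.belowPositivePart => (t : Γ ⧸ Δ) :=
  fun t u h => Subtype.ext (eq_of_sub_mem t.2 u.2 (QuotientAddGroup.eq_iff_sub_mem.mp h))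

lemma bijective_mk_belowPositivePart [Finite (Γ ⧸ Δ)]
    (hcard : Nat.card (Γ ⧸ Δ) ≤ Nat.card Δ.belowPositivePart) :
    Function.Bijective fun t : Δ.belowPositivePart => (t : Γ ⧸ Δ) :=
  injective_mk_belowPositivePart.bijective_of_nat_card_le hcard

end AddSubgroup

open AddSubgroup in
theorem coset_representatives_below_positive_part
    {Γ : Type*} [AddCommGroup Γ] [LinearOrder Γ] [IsOrderedAddMonoid Γ] (Δ : AddSubgroup Γ)
    (ε : ℕ) (hε : 0 < ε)
    (hindex : Nat.card (Γ ⧸ Δ) = ε)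
    (hcount : Nat.card {γ : Γ // 0 ≤ γ ∧ ∀ δ ∈ Δ, 0 < δ → γ < δ} = ε) :
    ∃ γs : Fin ε → Γ, StrictMono γs ∧ γs ⟨0, hε⟩ = 0 ∧
      (∀ i, 0 ≤ γs i ∧ ∀ δ ∈ Δ, 0 < δ → γs i < δ) ∧
      (∀ γ : Γ, ∃ i, γ - γs i ∈ Δ) := by
  change Nat.card Δ.belowPositivePart = ε at hcount
  have : Finite (Γ ⧸ Δ) := Nat.finite_of_card_ne_zero (by omega)
  have : Fintype Δ.belowPositivePart :=
    have : Finite Δ.belowPositivePart := Nat.finite_of_card_ne_zero (by omega)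
    Fintype.ofFinite _
  let e : Fin ε ≃o Δ.belowPositivePart :=
    monoEquivOfFin _ (Nat.card_eq_fintype_card.symm.trans hcount)
  have hsurj := (bijective_mk_belowPositivePart (hindex.trans hcount.symm).le).2
  refine ⟨fun i => e i, Subtype.strictMono_coe _ |>.comp e.strictMono, ?_, fun i => (e i).2,
    fun γ => ?_⟩
  · have hbot : IsBot (⟨0, zero_mem_belowPositivePart⟩ : Δ.belowPositivePart) := fun t => t.2.1
    exact congrArg Subtype.val (OrderIso.apply_zero_eq_of_isBot e hε hbot)
  · obtain ⟨t, ht⟩ := hsurj γ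
    refine ⟨e.symm t, ?_⟩
    simpa using QuotientAddGroup.eq_iff_sub_mem.mp ht.symm
end

section
/- Let Γ be a linearly ordered abelian group and Λ ⊆ Γ a final segment (upward-closed subset) without a least element. Let Δ be the largest isolated (convex) subgroup of Γ for which Λ - Δ = Λ. Then for every ε ∈ Γ with ε > δ for all δ ∈ Δ, there exists λ_0 ∈ Λ such that λ_0 - λ < ε for every λ ∈ Λ. Moreover, if Λ' ⊆ Λ is coinitial in Λ, then λ_0 can be chosen in Λ'. -/
/-!
The translation stabilizer `S` of `Λ` is a subgroup, convex because `Λ` is a final segment,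
and satisfies `Λ - S = Λ`; by maximality `S ≤ Δ`. If no `l₀` had `l₀ - λ < ε` for all `λ`,
then `Λ - ε ⊆ Λ`, and `Λ + ε ⊆ Λ` as `ε > 0`, so `ε ∈ S ≤ Δ`, contradicting `ε > Δ`.
Passing to a coinitial subset only lowers `l₀`.
-/

open Pointwise AddAction

theorem sub_mem_of_mem_stabilizer {Γ : Type*} [AddCommGroup Γ] {s : Set Γ} {l d : Γ}
    (hd : d ∈ stabilizer Γ s) (hl : l ∈ s) : l - d ∈ s := by
  have hd' : -d ∈ stabilizer Γ s := neg_mem hd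
  rw [mem_stabilizer_set] at hd'
  simpa [vadd_eq_add, neg_add_eq_sub] using (hd' l).2 hl

section Stabilizer

variable {Γ : Type*} [AddCommGroup Γ] [PartialOrder Γ] [IsOrderedAddMonoid Γ] {s : Set Γ}

theorem IsUpperSet.mem_stabilizer_of_nonneg_of_le (hs : IsUpperSet s) {γ δ : Γ}
    (hδ : δ ∈ stabilizer Γ s) (hγ : 0 ≤ γ) (hγδ : γ ≤ δ) : γ ∈ stabilizer Γ s := by
  rw [mem_stabilizer_set] at hδ ⊢
  refine fun b ↦ ⟨fun hγb ↦ (hδ b).1 (hs (add_le_add_left hγδ b) hγb), fun hb ↦ ?_⟩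
  exact hs (le_add_of_nonneg_left hγ) hb

theorem IsUpperSet.mem_stabilizer_of_forall_exists_le (hs : IsUpperSet s) {ε : Γ}
    (hε : 0 ≤ ε) (h : ∀ l ∈ s, ∃ l' ∈ s, ε ≤ l - l') : ε ∈ stabilizer Γ s := by
  rw [mem_stabilizer_set]
  refine fun b ↦ ⟨fun hεb ↦ ?_, fun hb ↦ hs (le_add_of_nonneg_left hε) hb⟩
  obtain ⟨l', hl', hle⟩ := h _ hεb
  exact hs (by simpa [vadd_eq_add, le_sub_iff_add_le, add_comm] using hle) hl'

end Stabilizer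

theorem final_segment_bounded_oscillation_general
    {Γ : Type*} [AddCommGroup Γ] [LinearOrder Γ] [IsOrderedAddMonoid Γ] (Λ : Set Γ)
    (hfinal : ∀ ⦃x y : Γ⦄, x ∈ Λ → x ≤ y → y ∈ Λ)
    (Δ : AddSubgroup Γ)
    (hmax : ∀ Δ' : AddSubgroup Γ,
      (∀ γ δ : Γ, δ ∈ Δ' → 0 ≤ γ → γ ≤ δ → γ ∈ Δ') →
      (∀ l ∈ Λ, ∀ d ∈ Δ', ∃ l' ∈ Λ, l' ≤ l - d) → Δ' ≤ Δ)
    (ε : Γ) (hε : ∀ δ ∈ Δ, δ < ε) :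
    (∃ l₀ ∈ Λ, ∀ l ∈ Λ, l₀ - l < ε) ∧
    (∀ Λ' : Set Γ, Λ' ⊆ Λ → (∀ l ∈ Λ, ∃ l' ∈ Λ', l' ≤ l) →
      ∃ l₀ ∈ Λ', ∀ l ∈ Λ, l₀ - l < ε) := by
  have hupper : IsUpperSet Λ := fun _ _ hle hx ↦ hfinal hx hle
  have hstab : stabilizer Γ Λ ≤ Δ :=
    hmax _ (fun _ _ hδ hγ hγδ ↦ hupper.mem_stabilizer_of_nonneg_of_le hδ hγ hγδ)
      (fun l hl d hd ↦ ⟨l - d, sub_mem_of_mem_stabilizer hd hl, le_rfl⟩)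
  have hexists : ∃ l₀ ∈ Λ, ∀ l ∈ Λ, l₀ - l < ε := by
    by_contra! h
    have hε0 : 0 ≤ ε := (hε 0 Δ.zero_mem).le
    exact lt_irrefl ε (hε ε (hstab (hupper.mem_stabilizer_of_forall_exists_le hε0 h)))
  refine ⟨hexists, fun Λ' _ hcoin ↦ ?_⟩
  obtain ⟨l₀, hl₀, hbound⟩ := hexists
  obtain ⟨l₀', hl₀', hle⟩ := hcoin l₀ hl₀
  exact ⟨l₀', hl₀', fun l hl ↦ (sub_le_sub_right hle l).trans_lt (hbound l hl)⟩

theorem final_segment_bounded_oscillation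
    {Γ : Type*} [AddCommGroup Γ] [LinearOrder Γ] [IsOrderedAddMonoid Γ] (Λ : Set Γ)
    (hfinal : ∀ ⦃x y : Γ⦄, x ∈ Λ → x ≤ y → y ∈ Λ)
    (hnomin : ∀ x ∈ Λ, ∃ y ∈ Λ, y < x)
    (Δ : AddSubgroup Γ)
    (hconv : ∀ γ δ : Γ, δ ∈ Δ → 0 ≤ γ → γ ≤ δ → γ ∈ Δ)
    (hΔ : ∀ l ∈ Λ, ∀ d ∈ Δ, ∃ l' ∈ Λ, l' ≤ l - d)
    (hmax : ∀ Δ' : AddSubgroup Γ,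
      (∀ γ δ : Γ, δ ∈ Δ' → 0 ≤ γ → γ ≤ δ → γ ∈ Δ') →
      (∀ l ∈ Λ, ∀ d ∈ Δ', ∃ l' ∈ Λ, l' ≤ l - d) → Δ' ≤ Δ)
    (ε : Γ) (hε : ∀ δ ∈ Δ, δ < ε) :
    (∃ l₀ ∈ Λ, ∀ l ∈ Λ, l₀ - l < ε) ∧
    (∀ Λ' : Set Γ, Λ' ⊆ Λ → (∀ l ∈ Λ, ∃ l' ∈ Λ', l' ≤ l) →
      ∃ l₀ ∈ Λ', ∀ l ∈ Λ, l₀ - l < ε) :=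
  final_segment_bounded_oscillation_general Λ hfinal Δ hmax ε hε
end

section
/- In the setting of a complete sequence of key polynomials {Q_i}_{i∈I} for a valuation ν on K[x] with support (g), for every f ∈ K[x] and every i ∈ I there exists i' ∈ I with i' ≤ i such that ν_i(f') − ν_i(f) ≥ α_{i'}, where α_{i'} = ν(Q_{i'}') − ν(Q_{i'}) and ν_i is the truncation of ν at Q_i. -/
open Polynomial

variable {K L Γ : Type*} [Field K] [Field L] [AddCommGroup Γ] [LinearOrder Γ] [IsOrderedAddMonoid Γ]

section KeyPolynomials

variable {K A Γ : Type*} [Field K] [Field A] [AddCommGroup Γ] [LinearOrder Γ] [IsOrderedAddMonoid Γ]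

/-- `γ = ε(f) = max{ ν̄(x - a) : a a root of f }`, computed in a valued
algebraically closed field `A` with distinguished point `θ` (the image of `η`). -/
def IsEps [Algebra K A] (wA : AddVal A Γ) (θ : A) (f : Polynomial K)
    (γ : WithTop Γ) : Prop :=
  (∃ b : A, Polynomial.aeval b f = 0 ∧ γ = wA.v (θ - b)) ∧
  ∀ b : A, Polynomial.aeval b f = 0 → wA.v (θ - b) ≤ γ

/-- `Q` is a key polynomial: `Q` is monic and `ε(f) < ε(Q)` for every `f` of
degree strictly smaller than `deg Q`. -/
def IsKeyPoly [Algebra K A] (wA : AddVal A Γ) (θ : A) (Q : Polynomial K) : Prop :=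
  Q.Monic ∧ ∀ f : Polynomial K, 0 < f.degree → f.degree < Q.degree →
    ∀ γf γQ : WithTop Γ, IsEps wA θ f γf → IsEps wA θ Q γQ → γf < γQ

/-- `f` is `q`-monic: the leading coefficient of the `q`-expansion of `f` is `1`. -/
def QMonic (q f : Polynomial K) : Prop :=
  ∃ (n : ℕ) (c : ℕ → Polynomial K), (∀ m, (c m).degree < q.degree) ∧
    (f = ∑ m ∈ Finset.range (n + 1), c m * q ^ m) ∧ c n = 1

end KeyPolynomials

/-!
Induct on `i`. Write `f = ∑ cₘ Qᵐ` in `Q = Q_i` and divide `cₘ Q' = rₘ + Q eₘ`; then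
`f' = ∑ (cₘ' + m eₘ + (m + 1) rₘ₊₁) Qᵐ` is the `Q`-expansion of `f'`. Evaluating at the root
of `Q` closest to `η`, the key polynomial `Q` makes `ν` multiplicative modulo `Q` on polynomials
of degree `< deg Q`, so `ν(rₘ) = ν(cₘ Q') ≤ ν(Q eₘ)`. This bounds the terms in `eₘ` and `rₘ₊₁`
by `α_i`. The terms `cₘ' Qᵐ` are bounded by induction: by completeness `ν(cₘ)` is the truncation
at some `Q_j` with `deg Q_j ≤ deg cₘ < deg Q_i`, hence `j < i`.
-/

namespace AddVal

def toAddValuation (w : AddVal L Γ) : AddValuation L (WithTop Γ) :=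
  AddValuation.of w.v ((w.top_iff 0).mpr rfl) w.map_one w.map_add w.map_mul

@[simp]
lemma toAddValuation_apply (w : AddVal L Γ) (x : L) : w.toAddValuation x = w.v x := rfl

end AddVal

namespace AddValuation

variable {R Γ₀ : Type*} [CommRing R] [LinearOrderedAddCommMonoidWithTop Γ₀] (v : AddValuation R Γ₀)

lemma map_natCast_nonneg (n : ℕ) : 0 ≤ v n := by
  simpa using v.map_le_sum (s := Finset.range n) (f := fun _ => 1) fun _ _ => v.map_one.ge

lemma map_multiset_prod (s : Multiset R) : v s.prod = (s.map v).sum := by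
  induction s using Multiset.induction with
  | empty => simp
  | cons a s ih => simp [v.map_mul, ih]

end AddValuation

section Expansion

lemma degree_mul_divByMonic_lt {Q a b : K[X]} (hQ : Q.Monic) (ha : a.degree < Q.degree)
    (hb : b.degree < Q.degree) : (a * b /ₘ Q).degree < Q.degree := by
  by_cases he : a * b /ₘ Q = 0
  · rw [he, degree_zero]; exact bot_le.trans_lt ha
  have hab : a * b ≠ 0 := fun h => he (by rw [h, zero_divByMonic])
  have ha' := natDegree_lt_natDegree (left_ne_zero_of_mul hab) ha
  have hb' := natDegree_lt_natDegree (right_ne_zero_of_mul hab) hb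
  have := natDegree_divByMonic (a * b) hQ
  rw [natDegree_mul (left_ne_zero_of_mul hab) (right_ne_zero_of_mul hab)] at this
  rw [degree_eq_natDegree he, degree_eq_natDegree hQ.ne_zero]
  exact_mod_cast (by omega : (a * b /ₘ Q).natDegree < Q.natDegree)

lemma eq_zero_of_sum_mul_pow_eq_zero {q : K[X]} {N : ℕ} {e : ℕ → K[X]}
    (he : ∀ m, (e m).degree < q.degree) (hsum : ∑ m ∈ Finset.range N, e m * q ^ m = 0) :
    ∀ m < N, e m = 0 := by
  have hq : q ≠ 0 := by rintro rfl; simpa using he 0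
  induction N generalizing e with
  | zero => simp
  | succ N ih =>
    rw [Finset.sum_range_succ', pow_zero, mul_one] at hsum
    simp_rw [pow_succ', mul_left_comm _ q, ← Finset.mul_sum] at hsum
    have he0 : e 0 = 0 := by
      refine eq_zero_of_dvd_of_degree_lt ⟨-∑ m ∈ Finset.range N, e (m + 1) * q ^ m, ?_⟩ (he 0)
      rw [mul_neg]; exact eq_neg_of_add_eq_zero_right hsum
    rw [he0, add_zero, mul_eq_zero, or_iff_right hq] at hsum
    rintro (_ | m) hm
    · exact he0
    · exact ih (fun m => he (m + 1)) hsum m (by omega)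

lemma eq_of_sum_mul_pow_eq {q : K[X]} {n n' : ℕ} {c d : ℕ → K[X]}
    (hc : ∀ m, (c m).degree < q.degree) (hd : ∀ m, (d m).degree < q.degree)
    (hcn : ∀ m, n < m → c m = 0) (hdn : ∀ m, n' < m → d m = 0)
    (h : ∑ m ∈ Finset.range (n + 1), c m * q ^ m = ∑ m ∈ Finset.range (n' + 1), d m * q ^ m) :
    c = d := by
  set N := n + n' + 1
  have hext : ∀ {c : ℕ → K[X]} {n}, n < N → (∀ m, n < m → c m = 0) →
      ∑ m ∈ Finset.range (n + 1), c m * q ^ m = ∑ m ∈ Finset.range N, c m * q ^ m :=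
    fun hnN hcn => Finset.sum_subset (Finset.range_subset_range.2 hnN) fun m _ hm => by
      rw [hcn m (by simpa using hm), zero_mul]
  rw [hext (by omega) hcn, hext (by omega) hdn, ← sub_eq_zero, ← Finset.sum_sub_distrib] at h
  simp_rw [← sub_mul] at h
  funext m
  by_cases hm : m < N
  · exact sub_eq_zero.1 (eq_zero_of_sum_mul_pow_eq_zero
      (fun m => (degree_sub_le _ _).trans_lt (max_lt (hc m) (hd m))) h m hm)
  · rw [hcn m (by omega), hdn m (by omega)]

lemma derivative_sum_mul_pow {R : Type*} [CommRing R] {Q : R[X]} {c e r : ℕ → R[X]} {N : ℕ}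
    (hsplit : ∀ m, c m * derivative Q = r m + Q * e m) (hr : r N = 0) :
    derivative (∑ m ∈ Finset.range N, c m * Q ^ m) =
      ∑ m ∈ Finset.range N,
        (derivative (c m) + m * e m + ((m + 1 : ℕ) : R[X]) * r (m + 1)) * Q ^ m := by
  have hshift : ∑ m ∈ Finset.range N, (m : R[X]) * r m * Q ^ (m - 1) =
      ∑ m ∈ Finset.range N, ((m + 1 : ℕ) : R[X]) * r (m + 1) * Q ^ m := by
    cases N with
    | zero => simp
    | succ N => rw [Finset.sum_range_succ', Finset.sum_range_succ _ N, hr]; simp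
  have hterm : ∀ m, derivative (c m * Q ^ m) =
      (derivative (c m) + m * e m) * Q ^ m + (m : R[X]) * r m * Q ^ (m - 1) := by
    rintro (_ | m)
    · simp
    · rw [derivative_mul, derivative_pow, Nat.add_sub_cancel, C_eq_natCast]
      linear_combination ((m + 1 : ℕ) : R[X]) * Q ^ m * hsplit (m + 1)
  simp_rw [derivative_sum, hterm, Finset.sum_add_distrib, hshift, ← Finset.sum_add_distrib,
    add_mul]

variable {Γ₀ : Type*} [LinearOrder Γ₀] {μ : K[X] → WithTop Γ₀} {q f : K[X]} {γ : WithTop Γ₀}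

lemma IsTrunc.degree_pos (h : IsTrunc μ q f γ) (hf : f ≠ 0) : 0 < q.degree := by
  obtain ⟨n, c, hc, rfl, -⟩ := h
  contrapose! hf
  exact Finset.sum_eq_zero fun m _ => by
    rw [degree_eq_bot.1 (Nat.WithBot.lt_zero_iff.1 ((hc m).trans_le hf)), zero_mul]

lemma IsTrunc.exists_coeff (hμ : μ 0 = ⊤) (h : IsTrunc μ q f γ) :
    ∃ (n : ℕ) (c : ℕ → K[X]), (∀ m, (c m).degree < q.degree) ∧ (∀ m, n < m → c m = 0) ∧
      f = ∑ m ∈ Finset.range (n + 1), c m * q ^ m ∧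
      IsLeast (Set.range fun m => μ (c m * q ^ m)) γ := by
  obtain ⟨n, c, hc, rfl, rfl⟩ := h
  refine ⟨n, fun m => if m ≤ n then c m else 0, fun m => ?_, fun m hm => if_neg (by omega),
    Finset.sum_congr rfl fun m hm => ?_, ?_, ?_⟩
  · dsimp only
    split_ifs
    · exact hc m
    · exact degree_zero (R := K) ▸ bot_le.trans_lt (hc 0)
  · dsimp only; rw [if_pos (Finset.mem_range_succ_iff.1 hm)]
  · obtain ⟨m, hm, hmin⟩ := (Finset.range (n + 1)).exists_mem_eq_inf'
      Finset.nonempty_range_add_one fun m => μ (c m * q ^ m)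
    exact ⟨m, by dsimp only; rw [if_pos (Finset.mem_range_succ_iff.1 hm), hmin]⟩
  · rintro _ ⟨m, rfl⟩
    dsimp only
    split_ifs with hm
    · exact Finset.inf'_le _ (Finset.mem_range_succ_iff.2 hm)
    · rw [zero_mul, hμ]; exact le_top

lemma IsTrunc.exists_eq_derivative_coeff (hμ : μ 0 = ⊤) {Q : K[X]} (hQ : Q.Monic) {n : ℕ}
    {c : ℕ → K[X]} (hc : ∀ m, (c m).degree < Q.degree) (hcn : ∀ m, n < m → c m = 0)
    (h : IsTrunc μ Q (derivative (∑ m ∈ Finset.range (n + 1), c m * Q ^ m)) γ) :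
    ∃ m, γ = μ ((derivative (c m) + m * (c m * derivative Q /ₘ Q) +
      ((m + 1 : ℕ) : K[X]) * (c (m + 1) * derivative Q %ₘ Q)) * Q ^ m) := by
  have hQ' : (derivative Q).degree < Q.degree := degree_derivative_lt hQ.ne_zero
  have hcast : ∀ (k : ℕ) {p : K[X]}, p.degree < Q.degree → (k * p).degree < Q.degree :=
    fun k p hp => by rw [natCast_mul]; exact (degree_smul_le _ _).trans_lt hp
  set D : ℕ → K[X] := fun m => derivative (c m) + m * (c m * derivative Q /ₘ Q) +
    ((m + 1 : ℕ) : K[X]) * (c (m + 1) * derivative Q %ₘ Q)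
  have hD : ∀ m, (D m).degree < Q.degree := fun m =>
    (degree_add_le _ _).trans_lt (max_lt ((degree_add_le _ _).trans_lt (max_lt
      (degree_derivative_le.trans_lt (hc m)) (hcast _ (degree_mul_divByMonic_lt hQ (hc m) hQ'))))
      (hcast _ (degree_modByMonic_lt _ hQ)))
  have hDn : ∀ m, n < m → D m = 0 := fun m hm => by
    simp [D, hcn m hm, hcn (m + 1) (by omega)]
  have hsum : derivative (∑ m ∈ Finset.range (n + 1), c m * Q ^ m) =
      ∑ m ∈ Finset.range (n + 1), D m * Q ^ m :=
    derivative_sum_mul_pow (e := fun m => c m * derivative Q /ₘ Q)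
      (r := fun m => c m * derivative Q %ₘ Q) (fun m => (modByMonic_add_div _ Q).symm)
      (by simp [hcn (n + 1)])
  obtain ⟨n', d, hd, hdn, hdsum, ⟨m, rfl⟩, -⟩ := h.exists_coeff hμ
  exact ⟨m, by rw [eq_of_sum_mul_pow_eq hd hD hdn hDn (hdsum.symm.trans hsum)]⟩

end Expansion

section KeyPolynomial

variable {A : Type*} [Field A] [Algebra K A]

lemma IsKeyPoly.degree_le_of_isEps_le {wA : AddVal A Γ} {θ : A} {Q P : K[X]}
    (hQ : IsKeyPoly wA θ Q) (hP : 0 < P.degree) {γQ γP : WithTop Γ} (hγQ : IsEps wA θ Q γQ)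
    (hγP : IsEps wA θ P γP) (hle : γQ ≤ γP) :
    Q.degree ≤ P.degree :=
  not_lt.1 fun hlt => (hQ.2 P hP hlt γP γQ hγP hγQ).not_ge hle

variable [IsAlgClosed A] (wA : AddVal A Γ) (θ : A)

lemma exists_isEps {p : K[X]} (hp : 0 < p.degree) : ∃ γ, IsEps wA θ p γ := by
  classical
  have hp0 : p.map (algebraMap K A) ≠ 0 :=
    (Polynomial.map_ne_zero_iff (algebraMap K A).injective).2 (ne_zero_of_degree_gt hp)
  have hroot : ∀ b : A, aeval b p = 0 ↔ b ∈ (p.map (algebraMap K A)).roots.toFinset := by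
    simp [mem_roots hp0, aeval_def, eval_map]
  obtain ⟨b₀, hb₀⟩ := IsAlgClosed.exists_root (p.map (algebraMap K A))
    (by rw [degree_map]; exact hp.ne')
  obtain ⟨b, hb, hmax⟩ := Finset.exists_max_image _ (fun b => wA.v (θ - b))
    ⟨b₀, (hroot b₀).1 (by rwa [aeval_def, ← eval_map])⟩
  exact ⟨_, ⟨b, (hroot b).2 hb, rfl⟩, fun c hc => hmax c ((hroot c).1 hc)⟩

/-- Each linear factor `x - c` of `p` takes the same value at `b` as at `θ`. -/
lemma v_aeval_eq_of_forall_root_lt {p : K[X]} {b : A}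
    (h : ∀ c : A, aeval c p = 0 → wA.v (θ - c) < wA.v (θ - b)) :
    wA.v (aeval b p) = wA.v (aeval θ p) := by
  by_cases hp0 : p = 0
  · simp [hp0]
  set P := p.map (algebraMap K A)
  have hP0 : P ≠ 0 := (Polynomial.map_ne_zero_iff (algebraMap K A).injective).2 hp0
  have hval : ∀ x : A, wA.v (aeval x p) =
      wA.v P.leadingCoeff + (P.roots.map fun c => wA.v (x - c)).sum := by
    intro x
    rw [aeval_def, ← eval_map]
    change wA.v (eval x P) = _
    conv_lhs => rw [(IsAlgClosed.splits P).eq_prod_roots]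
    rw [eval_mul, eval_C, eval_multiset_prod, ← wA.toAddValuation_apply, wA.toAddValuation.map_mul,
      wA.toAddValuation.map_multiset_prod, Multiset.map_map, Multiset.map_map]
    simp [Function.comp_def]
  rw [hval, hval]
  congr 2
  refine Multiset.map_congr rfl fun c hc => ?_
  have hc' : aeval c p = 0 := by rw [aeval_def, ← eval_map]; exact (mem_roots hP0).1 hc
  rw [← sub_add_sub_cancel b θ c, ← wA.toAddValuation_apply, ← wA.toAddValuation_apply,
    wA.toAddValuation.map_add_eq_of_lt_right]
  rw [wA.toAddValuation.map_sub_swap b θ]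
  exact h c hc'

variable {wA θ} {Q : K[X]}

lemma IsKeyPoly.v_aeval_eq_of_degree_lt (hQ : IsKeyPoly wA θ Q) {b : A}
    (hb : IsEps wA θ Q (wA.v (θ - b))) {p : K[X]} (hp : p.degree < Q.degree) :
    wA.v (aeval b p) = wA.v (aeval θ p) := by
  by_cases hp0 : p = 0
  · simp [hp0]
  refine v_aeval_eq_of_forall_root_lt wA θ fun c hc => ?_
  have hpos : 0 < p.degree :=
    degree_pos_of_aeval_root hp0 hc fun x hx => (algebraMap K A).injective (by rw [hx, map_zero])
  obtain ⟨γ, hγ⟩ := exists_isEps wA θ hpos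
  exact (hγ.2 c hc).trans_lt (hQ.2 p hpos hp γ _ hγ hb)

/-- Both sides can be computed at the root of `Q` closest to `θ`, where `Q` vanishes. -/
lemma IsKeyPoly.v_aeval_mul_modByMonic (hQ : IsKeyPoly wA θ Q) (hQpos : 0 < Q.degree)
    {a b : K[X]} (ha : a.degree < Q.degree) (hb : b.degree < Q.degree) :
    wA.v (aeval θ (a * b %ₘ Q)) = wA.v (aeval θ (a * b)) := by
  obtain ⟨γ, hγ⟩ := exists_isEps wA θ hQpos
  obtain ⟨x, hx, rfl⟩ := hγ.1
  have hmod : aeval x (a * b %ₘ Q) = aeval x (a * b) := by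
    conv_rhs => rw [← modByMonic_add_div (a * b) Q]
    rw [map_add, map_mul, hx, zero_mul, add_zero]
  rw [← hQ.v_aeval_eq_of_degree_lt hγ (degree_modByMonic_lt _ hQ.1), hmod, map_mul, map_mul,
    wA.map_mul, wA.map_mul, hQ.v_aeval_eq_of_degree_lt hγ ha, hQ.v_aeval_eq_of_degree_lt hγ hb]

lemma monotone_degree_of_isKeyPoly {ι : Type*} [Preorder ι] {Q : ι → K[X]}
    (hkey : ∀ i, IsKeyPoly wA θ (Q i)) (hpos : ∀ i, 0 < (Q i).degree)
    (hmono : ∀ i j, i ≤ j → ∀ γi γj : WithTop Γ, IsEps wA θ (Q i) γi → IsEps wA θ (Q j) γj →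
      γi ≤ γj) :
    Monotone fun i => (Q i).degree := fun i j hij => by
  obtain ⟨γi, hγi⟩ := exists_isEps wA θ (hpos i)
  obtain ⟨γj, hγj⟩ := exists_isEps wA θ (hpos j)
  exact (hkey i).degree_le_of_isEps_le (hpos j) hγi hγj (hmono i j hij γi γj hγi hγj)

end KeyPolynomial

section DerivativeBound

variable (ν : AddValuation K[X] (WithTop Γ)) {Q : K[X]}

lemma IsTrunc.le_apply {f : K[X]} {γ : WithTop Γ} (h : IsTrunc ν Q f γ) : γ ≤ ν f := by
  obtain ⟨n, c, -, rfl, rfl⟩ := h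
  exact ν.map_le_sum fun m hm => Finset.inf'_le _ hm

lemma val_derivative_add_le_divByMonic {c : K[X]}
    (hmod : ν (c * derivative Q %ₘ Q) = ν (c * derivative Q)) (j k : ℕ) :
    ν (derivative Q) + ν (c * Q ^ k) ≤ ν (j * (c * derivative Q /ₘ Q) * Q ^ k) + ν Q := by
  set e := c * derivative Q /ₘ Q
  have he : ν (c * derivative Q) ≤ ν (Q * e) := by
    rw [eq_sub_of_add_eq' (modByMonic_add_div _ Q)]
    simpa only [hmod, min_self] using ν.map_sub (c * derivative Q) (c * derivative Q %ₘ Q)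
  calc ν (derivative Q) + ν (c * Q ^ k) = ν (c * derivative Q) + ν (Q ^ k) := by
        simp only [ν.map_mul]; abel
    _ ≤ ν (Q * e) + ν (Q ^ k) := by gcongr
    _ = ν (e * Q ^ k) + ν Q := by simp only [ν.map_mul]; abel
    _ ≤ ν (j * e * Q ^ k) + ν Q := by
      rw [mul_assoc, ν.map_mul _ (e * _)]
      gcongr
      exact le_add_of_nonneg_left (ν.map_natCast_nonneg j)

lemma val_derivative_add_le_modByMonic {c : K[X]}
    (hmod : ν (c * derivative Q %ₘ Q) = ν (c * derivative Q)) (j k : ℕ) :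
    ν (derivative Q) + ν (c * Q ^ (k + 1)) ≤ ν (j * (c * derivative Q %ₘ Q) * Q ^ k) + ν Q := by
  set r := c * derivative Q %ₘ Q
  calc ν (derivative Q) + ν (c * Q ^ (k + 1)) = ν (r * Q ^ k) + ν Q := by
        simp only [hmod, ν.map_mul, pow_succ]; abel
    _ ≤ ν (j * r * Q ^ k) + ν Q := by
      rw [mul_assoc, ν.map_mul _ (r * _)]
      gcongr
      exact le_add_of_nonneg_left (ν.map_natCast_nonneg j)

lemma exists_mem_derivative_bound_of_isTrunc {S : Set K[X]} (hQ : Q.Monic) (hQS : Q ∈ S)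
    (hmod : ∀ a b : K[X], a.degree < Q.degree → b.degree < Q.degree → ν (a * b %ₘ Q) = ν (a * b))
    (hcoeff : ∀ g : K[X], 0 < g.degree → g.degree < Q.degree →
      ∃ P ∈ S, ν (derivative P) + ν g ≤ ν (derivative g) + ν P)
    {f : K[X]} {γ γ' : WithTop Γ} (hf : IsTrunc ν Q f γ) (hf' : IsTrunc ν Q (derivative f) γ') :
    ∃ P ∈ S, ν (derivative P) + γ ≤ γ' + ν P := by
  obtain ⟨n, c, hc, hcn, rfl, hγ⟩ := hf.exists_coeff ν.map_zero
  obtain ⟨m, rfl⟩ := hf'.exists_eq_derivative_coeff ν.map_zero hQ hc hcn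
  have hmodc : ∀ k, ν (c k * derivative Q %ₘ Q) = ν (c k * derivative Q) :=
    fun k => hmod _ _ (hc k) (degree_derivative_lt hQ.ne_zero)
  let Bounded (t : WithTop Γ) : Prop := ∃ P ∈ S, ν (derivative P) + γ ≤ t + ν P
  have hmono : ∀ {s t}, s ≤ t → Bounded s → Bounded t := fun hst ⟨P, hP, h⟩ =>
    ⟨P, hP, h.trans (by gcongr)⟩
  have hmin : ∀ {s t}, Bounded s → Bounded t → Bounded (min s t) := fun {s t} hs ht => by
    rcases min_choice s t with h | h <;> rw [h] <;> assumption
  have hA : Bounded (ν (derivative (c m) * Q ^ m)) := by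
    by_cases hcm : 0 < (c m).degree
    · obtain ⟨P, hP, h⟩ := hcoeff (c m) hcm (hc m)
      refine ⟨P, hP, ?_⟩
      calc ν (derivative P) + γ ≤ ν (derivative P) + ν (c m) + ν (Q ^ m) := by
            rw [add_assoc, ← ν.map_mul]; gcongr; exact hγ.2 ⟨m, rfl⟩
        _ ≤ ν (derivative (c m)) + ν P + ν (Q ^ m) := by gcongr
        _ = ν (derivative (c m) * Q ^ m) + ν P := by rw [ν.map_mul, add_right_comm]
    · rw [derivative_of_natDegree_zero (natDegree_eq_zero_iff_degree_le_zero.2 (not_lt.1 hcm)),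
        zero_mul, ν.map_zero]
      exact ⟨Q, hQS, by rw [top_add]; exact le_top⟩
  have hB : Bounded (ν (m * (c m * derivative Q /ₘ Q) * Q ^ m)) :=
    ⟨Q, hQS, (add_le_add_right (hγ.2 ⟨m, rfl⟩) _).trans
      (val_derivative_add_le_divByMonic ν (hmodc m) m m)⟩
  have hC : Bounded (ν (((m + 1 : ℕ) : K[X]) * (c (m + 1) * derivative Q %ₘ Q) * Q ^ m)) :=
    ⟨Q, hQS, (add_le_add_right (hγ.2 ⟨m + 1, rfl⟩) _).trans
      (val_derivative_add_le_modByMonic ν (hmodc (m + 1)) (m + 1) m)⟩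
  refine hmono ?_ (hmin (hmin hA hB) hC)
  simp only [add_mul]
  exact (min_le_min_right _ (ν.map_add _ _)).trans (ν.map_add _ _)

end DerivativeBound

theorem trunc_deriv_lower_bound_general
    {K L A Γ : Type*} [Field K] [Field L] [Field A]
    [AddCommGroup Γ] [LinearOrder Γ] [IsOrderedAddMonoid Γ]
    [Algebra K L] [Algebra L A] [Algebra K A] [IsScalarTower K L A] [IsAlgClosed A]
    {I : Type*} [LinearOrder I] [WellFoundedLT I]
    (w : AddVal L Γ) (wA : AddVal A Γ)
    (hwA : ∀ y : L, wA.v (algebraMap L A y) = w.v y)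
    (η : L)
    (Q : I → Polynomial K)
    (hkey : ∀ i : I, IsKeyPoly wA (algebraMap L A η) (Q i))
    (hmono : ∀ i j : I, i ≤ j → ∀ γi γj : WithTop Γ,
      IsEps wA (algebraMap L A η) (Q i) γi →
      IsEps wA (algebraMap L A η) (Q j) γj → γi ≤ γj)
    -- `νtr i` is the truncation of `ν` at `Q i`:
    (νtr : I → Polynomial K → WithTop Γ)
    (htr : ∀ (i : I) (f : Polynomial K),
      IsTrunc (fun h => w.v (Polynomial.aeval η h)) (Q i) f (νtr i f))
    -- the sequence is complete for `ν`:
    (hcomp : ∀ f : Polynomial K, 1 ≤ f.degree →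
      ∃ i, (Q i).degree ≤ f.degree ∧ νtr i f = w.v (Polynomial.aeval η f))
    (f : Polynomial K) (i : I) :
    ∃ i' : I, i' ≤ i ∧
      w.v (Polynomial.aeval η (Polynomial.derivative (Q i'))) + νtr i f ≤
        νtr i (Polynomial.derivative f) + w.v (Polynomial.aeval η (Q i')) := by
  let ν : AddValuation K[X] (WithTop Γ) := w.toAddValuation.comap (aeval η).toRingHom
  have hνA : ∀ p : K[X], wA.v (aeval (algebraMap L A η) p) = ν p := fun p => by
    rw [aeval_algebraMap_apply, hwA]; rfl
  have hpos : ∀ k, 0 < (Q k).degree := fun k => (htr k X).degree_pos X_ne_zero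
  have hdeg := monotone_degree_of_isKeyPoly hkey hpos hmono
  induction i using WellFoundedLT.induction generalizing f with
  | _ i IH =>
  have hcoeff : ∀ g : K[X], 0 < g.degree → g.degree < (Q i).degree →
      ∃ P ∈ Q '' Set.Iic i, ν (derivative P) + ν g ≤ ν (derivative g) + ν P := by
    intro g hg0 hg
    obtain ⟨j, hjg, hj⟩ := hcomp g (Nat.WithBot.one_le_iff_zero_lt.2 hg0)
    have hji : j < i := lt_of_not_ge fun hij => (hjg.trans_lt hg).not_ge (hdeg hij)
    obtain ⟨i', hi'j, h⟩ := IH j hji g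
    refine ⟨Q i', ⟨i', hi'j.trans hji.le, rfl⟩, ?_⟩
    calc ν (derivative (Q i')) + ν g = ν (derivative (Q i')) + νtr j g := by rw [hj]; rfl
      _ ≤ νtr j (derivative g) + ν (Q i') := h
      _ ≤ ν (derivative g) + ν (Q i') := by gcongr; exact (htr j _).le_apply ν
  obtain ⟨_, ⟨i', hi', rfl⟩, h⟩ := exists_mem_derivative_bound_of_isTrunc ν
    (S := Q '' Set.Iic i) (hkey i).1 ⟨i, le_rfl, rfl⟩
    (fun a b ha hb => by simpa only [hνA] using (hkey i).v_aeval_mul_modByMonic (hpos i) ha hb)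
    hcoeff (htr i f) (htr i _)
  exact ⟨i', hi', h⟩

theorem trunc_deriv_lower_bound
    {K L A Γ : Type*} [Field K] [Field L] [Field A]
    [AddCommGroup Γ] [LinearOrder Γ] [IsOrderedAddMonoid Γ]
    [Algebra K L] [Algebra L A] [Algebra K A] [IsScalarTower K L A] [IsAlgClosed A]
    {I : Type*} [LinearOrder I] [WellFoundedLT I] [OrderTop I]
    (w : AddVal L Γ) (wA : AddVal A Γ)
    (hwA : ∀ y : L, wA.v (algebraMap L A y) = w.v y)
    (η : L) (hint : IsIntegral K η) (hgen : Algebra.adjoin K {η} = ⊤)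
    -- `e(L/K, v) = 1`:
    (he : ∀ y : L, y ≠ 0 → ∃ c : K, c ≠ 0 ∧ w.v (algebraMap K L c) = w.v y)
    (Q : I → Polynomial K) (hQg : Q ⊤ = minpoly K η)
    (hkey : ∀ i : I, IsKeyPoly wA (algebraMap L A η) (Q i))
    (hmono : ∀ i j : I, i ≤ j → ∀ γi γj : WithTop Γ,
      IsEps wA (algebraMap L A η) (Q i) γi →
      IsEps wA (algebraMap L A η) (Q j) γj → γi ≤ γj)
    -- `νtr i` is the truncation of `ν` at `Q i`:
    (νtr : I → Polynomial K → WithTop Γ)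
    (htr : ∀ (i : I) (f : Polynomial K),
      IsTrunc (fun h => w.v (Polynomial.aeval η h)) (Q i) f (νtr i f))
    -- the sequence is complete for `ν`:
    (hcomp : ∀ f : Polynomial K, 1 ≤ f.degree →
      ∃ i, (Q i).degree ≤ f.degree ∧ νtr i f = w.v (Polynomial.aeval η f))
    (f : Polynomial K) (i : I) :
    ∃ i' : I, i' ≤ i ∧
      w.v (Polynomial.aeval η (Polynomial.derivative (Q i'))) + νtr i f ≤
        νtr i (Polynomial.derivative f) + w.v (Polynomial.aeval η (Q i')) :=
  trunc_deriv_lower_bound_general w wA hwA η Q hkey hmono νtr htr hcomp f i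
end

section
/- Let (L/K,v) be a Kummer extension of degree p with g = x^p − a, v(a) = 0, residue characteristic p, rk(v) = 1, and {x − a_n}_{n∈ℕ} a cofinal sequence of degree-one key polynomials for the induced valuation ν. Set γ = sup_n ν(x − a_n) (taken in ℝ). Then, with α_n = −ν(x − a_n) and β_n = v(p) − p·ν(x − a_n) for large n, the equality of final segments α = β (equivalently Ω_{O_L/O_K} = 0) holds if and only if γ = v(p)/(p−1). -/
open Polynomial

variable {K L Γ : Type*} [Field K] [Field L] [AddCommGroup Γ] [LinearOrder Γ] [IsOrderedAddMonoid Γ]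

/-!
Both final segments are open rays cut out of the value group: since `c` increases strictly to
`γ = sup c`, the elements `-c n` and `v(p) - p c n` of the value group decrease strictly to
`-γ` and `v(p) - pγ`, so `α` and `β` consist of the values above these bounds. Values of that
form accumulate at each bound from above, so the two rays agree exactly when their bounds do,
and `-γ = v(p) - pγ` is `γ = v(p)/(p - 1)`.
-/

open Set

namespace AddVal

variable (w : AddVal L Γ)

lemma ne_zero_of_v_eq_coe {x : L} {r : Γ} (h : w.v x = r) : x ≠ 0 := by
  rintro rfl
  exact WithTop.top_ne_coe (((w.top_iff 0).mpr rfl).symm.trans h)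

lemma v_inv {x : L} {r : Γ} (h : w.v x = r) : w.v x⁻¹ = ((-r : Γ) : WithTop Γ) := by
  have hmul : w.v x + w.v x⁻¹ = 0 := by
    rw [← w.map_mul, mul_inv_cancel₀ (w.ne_zero_of_v_eq_coe h), w.map_one]
  obtain ⟨s, hs⟩ := WithTop.ne_top_iff_exists.mp
    (mt (w.top_iff _).mp (inv_ne_zero (w.ne_zero_of_v_eq_coe h)))
  rw [h, ← hs, ← WithTop.coe_add, WithTop.coe_eq_zero] at hmul
  rw [← hs, eq_neg_of_add_eq_zero_right hmul]

/-- The value group `vL`. -/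
def valueGroup : AddSubgroup Γ where
  carrier := {γ | ∃ y : L, y ≠ 0 ∧ w.v y = γ}
  zero_mem' := ⟨1, one_ne_zero, w.map_one⟩
  add_mem' := by
    rintro _ _ ⟨x, hx, hvx⟩ ⟨y, hy, hvy⟩
    exact ⟨x * y, mul_ne_zero hx hy, by rw [w.map_mul, hvx, hvy, WithTop.coe_add]⟩
  neg_mem' := by
    rintro _ ⟨x, hx, hvx⟩
    exact ⟨x⁻¹, inv_ne_zero hx, w.v_inv hvx⟩

lemma coe_mem_valueGroup {x : L} {r : Γ} (h : w.v x = r) : r ∈ w.valueGroup :=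
  ⟨x, w.ne_zero_of_v_eq_coe h, h⟩

end AddVal

lemma StrictMono.lt_ciSup {α : Type*} [ConditionallyCompleteLinearOrder α] {c : ℕ → α}
    (hc : StrictMono c) (hb : BddAbove (range c)) (n : ℕ) : c n < ⨆ i, c i :=
  (hc n.lt_succ_self).trans_le (le_ciSup hb _)

lemma Monotone.exists_ge_lt_of_lt_ciSup {α : Type*} [ConditionallyCompleteLinearOrder α]
    {c : ℕ → α} (hc : Monotone c) {x : α} (hx : x < ⨆ i, c i) (N : ℕ) :
    ∃ n, N ≤ n ∧ x < c n := by
  obtain ⟨m, hm⟩ := exists_lt_of_lt_ciSup hx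
  exact ⟨max m N, le_max_right m N, hm.trans_le (hc (le_max_left m N))⟩

section AffineTail

variable {c : ℕ → ℝ} (hc : StrictMono c) (hb : BddAbove (range c)) {k : ℝ} (hk : 0 < k)
  (t : ℝ) (N : ℕ)
include hc hb hk

lemma exists_ge_sub_mul_mem_Ioo {x : ℝ} (hx : t - k * ⨆ i, c i < x) :
    ∃ n, N ≤ n ∧ t - k * c n ∈ Ioo (t - k * ⨆ i, c i) x := by
  obtain ⟨n, hN, hn⟩ :=
    hc.monotone.exists_ge_lt_of_lt_ciSup (x := (t - x) / k) (by rw [div_lt_iff₀ hk]; linarith) N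
  rw [div_lt_iff₀ hk] at hn
  have hsup := mul_lt_mul_of_pos_left (hc.lt_ciSup hb n) hk
  exact ⟨n, hN, by linarith, by linarith⟩

lemma setOf_exists_ge_sub_mul_le_eq_Ioi :
    {γ | ∃ n, N ≤ n ∧ t - k * c n ≤ γ} = Ioi (t - k * ⨆ i, c i) := by
  ext γ
  constructor
  · rintro ⟨n, -, hn⟩
    have hsup := mul_lt_mul_of_pos_left (hc.lt_ciSup hb n) hk
    exact show _ < γ by linarith
  · intro hγ
    obtain ⟨n, hN, -, hn⟩ := exists_ge_sub_mul_mem_Ioo hc hb hk t N hγ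
    exact ⟨n, hN, hn.le⟩

end AffineTail

lemma le_of_inter_Ioi_subset {α : Type*} [LinearOrder α] {S : Set α} {A B : α}
    (hA : ∀ x, A < x → ∃ y ∈ S, y ∈ Ioo A x) (h : S ∩ Ioi A ⊆ S ∩ Ioi B) : B ≤ A := by
  by_contra! hAB
  obtain ⟨y, hy, hAy, hyB⟩ := hA B hAB
  exact (h ⟨hy, hAy⟩).2.not_gt hyB

lemma inter_Ioi_eq_inter_Ioi_iff {α : Type*} [LinearOrder α] {S : Set α} {A B : α}
    (hA : ∀ x, A < x → ∃ y ∈ S, y ∈ Ioo A x) (hB : ∀ x, B < x → ∃ y ∈ S, y ∈ Ioo B x) :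
    S ∩ Ioi A = S ∩ Ioi B ↔ A = B :=
  ⟨fun h => le_antisymm (le_of_inter_Ioi_subset hB h.ge) (le_of_inter_Ioi_subset hA h.le),
    by rintro rfl; rfl⟩

theorem kummer_alpha_eq_beta_iff_general
    {K L : Type*} [Field K] [Field L] [Algebra K L]
    (p : ℕ) (hp : p.Prime)
    (w : AddVal L ℝ)
    (a : K)
    (η : L)
    (vp : ℝ)
    -- `ν(g') = v(p)`:
    (hg' : w.v (Polynomial.aeval η
      (Polynomial.derivative (Polynomial.X ^ p - Polynomial.C a))) =
        (vp : WithTop ℝ))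
    (aseq : ℕ → K) (c : ℕ → ℝ)
    (hc : ∀ n, w.v (η - algebraMap K L (aseq n)) = ((c n : ℝ) : WithTop ℝ))
    (hmono : StrictMono c) (hbdd : BddAbove (Set.range c))
    (N : ℕ) :
    -- `α = β` as final segments of `vL` …
    ({γ : ℝ | (∃ y : L, y ≠ 0 ∧ w.v y = (γ : WithTop ℝ)) ∧
        ∃ n : ℕ, -(c n) ≤ γ} =
      {γ : ℝ | (∃ y : L, y ≠ 0 ∧ w.v y = (γ : WithTop ℝ)) ∧
        ∃ n : ℕ, N ≤ n ∧ vp - (p : ℝ) * c n ≤ γ}) ↔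
    -- … iff `γ = v(p)/(p-1)`:
    (⨆ n : ℕ, c n) = vp / ((p : ℝ) - 1) := by
  have hp1 : (1 : ℝ) < p := by exact_mod_cast hp.one_lt
  have hcv n : c n ∈ w.valueGroup := w.coe_mem_valueGroup (hc n)
  have hvpv : vp ∈ w.valueGroup := w.coe_mem_valueGroup hg'
  have hα := setOf_exists_ge_sub_mul_le_eq_Ioi hmono hbdd one_pos 0 0
  have hβ := setOf_exists_ge_sub_mul_le_eq_Ioi hmono hbdd (by linarith : (0 : ℝ) < p) vp N
  simp only [zero_le, true_and, zero_sub, one_mul] at hα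
  have hαacc x (hx : -(⨆ i, c i) < x) :
      ∃ y ∈ (w.valueGroup : Set ℝ), y ∈ Ioo (-(⨆ i, c i)) x := by
    obtain ⟨n, -, hn⟩ := exists_ge_sub_mul_mem_Ioo hmono hbdd one_pos 0 0 (by simpa using hx)
    exact ⟨-(c n), neg_mem (hcv n), by simpa using hn⟩
  have hβacc x (hx : vp - p * (⨆ i, c i) < x) :
      ∃ y ∈ (w.valueGroup : Set ℝ), y ∈ Ioo (vp - p * (⨆ i, c i)) x := by
    obtain ⟨n, -, hn⟩ := exists_ge_sub_mul_mem_Ioo hmono hbdd (by linarith : (0 : ℝ) < p) vp N hx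
    exact ⟨_, sub_mem hvpv (nsmul_eq_mul p (c n) ▸ nsmul_mem (hcv n) p), hn⟩
  change (w.valueGroup : Set ℝ) ∩ {γ | ∃ n, -(c n) ≤ γ} =
    (w.valueGroup : Set ℝ) ∩ {γ | ∃ n, N ≤ n ∧ vp - p * c n ≤ γ} ↔ _
  rw [hα, hβ, inter_Ioi_eq_inter_Ioi_iff hαacc hβacc, eq_div_iff (by linarith)]
  constructor <;> intro h <;> linarith

theorem kummer_alpha_eq_beta_iff
    {K L : Type*} [Field K] [Field L] [Algebra K L]
    (p : ℕ) (hp : p.Prime)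
    (w : AddVal L ℝ)
    (a : K) (hva : w.v (algebraMap K L a) = 0)
    (hirr : Irreducible (Polynomial.X ^ p - Polynomial.C a))
    (η : L) (hη : Polynomial.aeval η (Polynomial.X ^ p - Polynomial.C a) = 0)
    (hgen : Algebra.adjoin K {η} = ⊤)
    (vp : ℝ) (hvp : 0 < vp)
    -- `ν(g') = v(p)`:
    (hg' : w.v (Polynomial.aeval η
      (Polynomial.derivative (Polynomial.X ^ p - Polynomial.C a))) =
        (vp : WithTop ℝ))
    (aseq : ℕ → K) (c : ℕ → ℝ)
    (hc : ∀ n, w.v (η - algebraMap K L (aseq n)) = ((c n : ℝ) : WithTop ℝ))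
    (hmono : StrictMono c) (hbdd : BddAbove (Set.range c))
    -- the sequence `{x - a_n}` is cofinal among degree-one polynomials:
    (hcofinal : ∀ b : K, ∃ n : ℕ,
      w.v (η - algebraMap K L b) ≤ w.v (η - algebraMap K L (aseq n)))
    (N : ℕ)
    -- for `n ≥ N`, `ν_n(g) = p·ν(x - a_n)`:
    (hβn : ∀ n, N ≤ n →
      IsTrunc (fun f => w.v (Polynomial.aeval η f))
        (Polynomial.X - Polynomial.C (aseq n))
        (Polynomial.X ^ p - Polynomial.C a)
        (((p : ℝ) * c n : ℝ) : WithTop ℝ)) :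
    -- `α = β` as final segments of `vL` …
    ({γ : ℝ | (∃ y : L, y ≠ 0 ∧ w.v y = (γ : WithTop ℝ)) ∧
        ∃ n : ℕ, -(c n) ≤ γ} =
      {γ : ℝ | (∃ y : L, y ≠ 0 ∧ w.v y = (γ : WithTop ℝ)) ∧
        ∃ n : ℕ, N ≤ n ∧ vp - (p : ℝ) * c n ≤ γ}) ↔
    -- … iff `γ = v(p)/(p-1)`:
    (⨆ n : ℕ, c n) = vp / ((p : ℝ) - 1) :=
  kummer_alpha_eq_beta_iff_general p hp w a η vp hg' aseq c hc hmono hbdd N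
end
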